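/- arXiv:math/0210268 — 8 statements merged into one kernel-verified Lean document; each statement's English description precedes it below -/
import Mathlib

section
/- The number of occurrences of the letter 2 in the Peano word X_n is 4^{n-1} + 2^{n-1} - 1. -/
/-- φ1: reverse the word and apply 1↦4, 2↦1, 3↦2, 4↦3. -/
def phi1 (A : List ℕ) : List ℕ := A.reverse.map (fun x => if x = 1 then 4 else x - 1)

/-- φ2: reverse the word and apply 1↦2, 2↦3, 3↦4, 4↦1. -/
def phi2 (A : List ℕ) : List ℕ := A.reverse.map (fun x => if x = 4 then 1 else x + 1)

/-- The Peano words: `peano 1 = 123`, `peano (n+1) = φ1(Xₙ) 1 Xₙ 2 Xₙ 3 φ2(Xₙ)`. -/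
def peano : ℕ → List ℕ
  | 0 => []
  | 1 => [1, 2, 3]
  | n + 2 =>
      phi1 (peano (n + 1)) ++ [1] ++ peano (n + 1) ++ [2] ++ peano (n + 1)
        ++ [3] ++ phi2 (peano (n + 1))

/-- Number of rises of a word. -/
def rises (w : List ℕ) : ℕ := ((w.zip w.tail).filter (fun p => p.1 < p.2)).length

/-- Number of descents of a word. -/
def descents (w : List ℕ) : ℕ := ((w.zip w.tail).filter (fun p => p.2 < p.1)).length

lemma peano_mem (n : ℕ) : ∀ x ∈ peano n, x = 1 ∨ x = 2 ∨ x = 3 ∨ x = 4 := by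
  induction n using Nat.twoStepInduction with
  | zero => simp [peano]
  | one => intro x hx; simp [peano] at hx; omega
  | more n _ ih =>
    intro x hx
    simp only [peano, List.mem_append, List.mem_singleton, phi1, phi2, List.mem_map,
      List.mem_reverse] at hx
    rcases hx with ((((((⟨y, hy, rfl⟩ | h) | h) | h) | h) | h) | ⟨y, hy, rfl⟩) <;>
      first
        | omega
        | exact ih _ ‹_›
        | (rcases ih y hy with h|h|h|h <;> simp [h])

lemma count_phi1 (w : List ℕ) (hw : ∀ x ∈ w, x = 1 ∨ x = 2 ∨ x = 3 ∨ x = 4) (a b : ℕ)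
    (hab : ∀ x, (x = 1 ∨ x = 2 ∨ x = 3 ∨ x = 4) →
      ((if x = 1 then 4 else x - 1) = a ↔ x = b)) :
    (phi1 w).count a = w.count b := by
  simp only [phi1, List.count_eq_countP, List.countP_map]
  rw [List.countP_reverse]
  refine List.countP_congr (fun x hx => ?_)
  simp only [Function.comp, beq_iff_eq]
  exact hab x (hw x hx)

lemma count_phi2 (w : List ℕ) (hw : ∀ x ∈ w, x = 1 ∨ x = 2 ∨ x = 3 ∨ x = 4) (a b : ℕ)
    (hab : ∀ x, (x = 1 ∨ x = 2 ∨ x = 3 ∨ x = 4) →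
      ((if x = 4 then 1 else x + 1) = a ↔ x = b)) :
    (phi2 w).count a = w.count b := by
  simp only [phi2, List.count_eq_countP, List.countP_map]
  rw [List.countP_reverse]
  refine List.countP_congr (fun x hx => ?_)
  simp only [Function.comp, beq_iff_eq]
  exact hab x (hw x hx)

lemma peano_counts (n : ℕ) :
    (peano (n+1)).count 1 = 4 ^ n ∧ (peano (n+1)).count 2 + 1 = 4 ^ n + 2 ^ n ∧
    (peano (n+1)).count 3 = 4 ^ n ∧ (peano (n+1)).count 4 + 2 ^ n = 4 ^ n := by
  induction n with
  | zero => simp [peano]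
  | succ n ih =>
    obtain ⟨h1, h2, h3, h4⟩ := ih
    have hw := peano_mem (n+1)
    have e11 : (phi1 (peano (n+1))).count 1 = (peano (n+1)).count 2 :=
      count_phi1 _ hw 1 2 (by rintro x (rfl|rfl|rfl|rfl) <;> simp)
    have e12 : (phi1 (peano (n+1))).count 2 = (peano (n+1)).count 3 :=
      count_phi1 _ hw 2 3 (by rintro x (rfl|rfl|rfl|rfl) <;> simp)
    have e13 : (phi1 (peano (n+1))).count 3 = (peano (n+1)).count 4 :=
      count_phi1 _ hw 3 4 (by rintro x (rfl|rfl|rfl|rfl) <;> simp)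
    have e14 : (phi1 (peano (n+1))).count 4 = (peano (n+1)).count 1 :=
      count_phi1 _ hw 4 1 (by rintro x (rfl|rfl|rfl|rfl) <;> simp)
    have e21 : (phi2 (peano (n+1))).count 1 = (peano (n+1)).count 4 :=
      count_phi2 _ hw 1 4 (by rintro x (rfl|rfl|rfl|rfl) <;> simp)
    have e22 : (phi2 (peano (n+1))).count 2 = (peano (n+1)).count 1 :=
      count_phi2 _ hw 2 1 (by rintro x (rfl|rfl|rfl|rfl) <;> simp)
    have e23 : (phi2 (peano (n+1))).count 3 = (peano (n+1)).count 2 :=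
      count_phi2 _ hw 3 2 (by rintro x (rfl|rfl|rfl|rfl) <;> simp)
    have e24 : (phi2 (peano (n+1))).count 4 = (peano (n+1)).count 3 :=
      count_phi2 _ hw 4 3 (by rintro x (rfl|rfl|rfl|rfl) <;> simp)
    have hpow4 : (4:ℕ) ^ (n+1) = 4 * 4 ^ n := by ring
    have hpow2 : (2:ℕ) ^ (n+1) = 2 * 2 ^ n := by ring
    refine ⟨?_, ?_, ?_, ?_⟩ <;>
      [skip; skip; skip; skip] <;>
      · simp only [show n+1+1 = n+2 from rfl, peano, List.count_append]
        simp only [List.count_cons, List.count_nil]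
        norm_num
        omega

theorem peano_count_2 (n : ℕ) (hn : 1 ≤ n) : (peano n).count 2 = 4 ^ (n - 1) + 2 ^ (n - 1) - 1 := by
  obtain ⟨m, rfl⟩ : ∃ m, n = m + 1 := ⟨n - 1, by omega⟩
  have h := (peano_counts m).2.1
  simp only [Nat.add_sub_cancel]
  omega
end

section
/- For every ℓ ≥ 1, the number of (not necessarily contiguous) subsequences of length ℓ of the Peano word X_n all of whose letters are equal is C(4^{n-1}-2^{n-1}, ℓ) + 2·C(4^{n-1}, ℓ) + C(4^{n-1}+2^{n-1}-1, ℓ). -/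
/-- Number of constant subsequences of length `ℓ`: sets of `ℓ` positions at which
all letters of `w` coincide. -/
def constCount (w : List ℕ) (ℓ : ℕ) : ℕ :=
  (Finset.univ.filter (fun s : Finset (Fin w.length) =>
    s.card = ℓ ∧ ∀ i ∈ s, ∀ j ∈ s, w.get i = w.get j)).card

/-!
For `ℓ ≥ 1` a constant subsequence of length `ℓ` is an `ℓ`-subset of the positions of a single
letter, and different letters give disjoint families, so a word with `cₐ` occurrences of `a`
has `∑ₐ C(cₐ, ℓ)` of them. The maps `φ₁`, `φ₂` permute the letters cyclically, so the letter
counts of `Xₙ` obey a linear recurrence, whose solution is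
`(4ⁿ⁻¹, 4ⁿ⁻¹ + 2ⁿ⁻¹ - 1, 4ⁿ⁻¹, 4ⁿ⁻¹ - 2ⁿ⁻¹)` for the letters `1, 2, 3, 4`.
-/

open Finset

lemma card_filter_get_eq_count {α : Type*} [DecidableEq α] (w : List α) (a : α) :
    #{i : Fin w.length | w.get i = a} = w.count a :=
  Fin.card_filter_univ_eq_vector_get_eq_count a ⟨w, rfl⟩

lemma constCount_eq_sum_choose {w : List ℕ} {S : Finset ℕ} (hw : ∀ x ∈ w, x ∈ S) {ℓ : ℕ}
    (hℓ : 1 ≤ ℓ) : constCount w ℓ = ∑ a ∈ S, (w.count a).choose ℓ := by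
  set pos : ℕ → Finset (Fin w.length) := fun a => {i | w.get i = a}
  have hconst : ({s | #s = ℓ ∧ ∀ i ∈ s, ∀ j ∈ s, w.get i = w.get j} : Finset (Finset _)) =
      S.biUnion fun a => (pos a).powersetCard ℓ := by
    ext s
    simp only [mem_filter, mem_univ, true_and, mem_biUnion, mem_powersetCard, pos,
      subset_iff]
    constructor
    · rintro ⟨hcard, hs⟩
      obtain ⟨i₀, hi₀⟩ := card_pos.mp (by omega : 0 < #s)
      exact ⟨_, hw _ (w.get_mem i₀), fun i hi => hs i hi i₀ hi₀, hcard⟩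
    · rintro ⟨a, -, hs, hcard⟩
      exact ⟨hcard, fun i hi j hj => (hs hi).trans (hs hj).symm⟩
  have hdisj : (S : Set ℕ).PairwiseDisjoint fun a => (pos a).powersetCard ℓ := by
    intro a _ b _ hab
    refine disjoint_left.mpr fun s hsa hsb => ?_
    rw [mem_powersetCard] at hsa hsb
    obtain ⟨i, hi⟩ := card_pos.mp (by omega : 0 < #s)
    exact hab ((mem_filter.mp (hsa.1 hi)).2.symm.trans (mem_filter.mp (hsb.1 hi)).2)
  rw [constCount, hconst, card_biUnion hdisj]
  simp only [card_powersetCard, pos, card_filter_get_eq_count]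

lemma count_map_of_forall_iff {α β : Type*} [DecidableEq α] [DecidableEq β] {f : α → β}
    {A : List α} {u : α} {v : β} (h : ∀ x ∈ A, f x = v ↔ x = u) :
    (A.map f).count v = A.count u := by
  rw [List.count_eq_countP, List.countP_map, List.count_eq_countP]
  exact List.countP_congr fun x hx => by simpa using h x hx

lemma count_reverse_map_of_forall_iff {α β : Type*} [DecidableEq α] [DecidableEq β] {f : α → β}
    {A : List α} {L : Finset α} (hA : ∀ x ∈ A, x ∈ L) {u : α} {v : β}
    (h : ∀ x ∈ L, f x = v ↔ x = u) : (A.reverse.map f).count v = A.count u := by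
  rw [count_map_of_forall_iff fun x hx => h x (hA x (List.mem_reverse.mp hx)), List.count_reverse]

lemma forall_mem_reverse_map {α : Type*} {f : α → α} {A : List α} {L : Finset α}
    (hA : ∀ x ∈ A, x ∈ L) (hf : ∀ x ∈ L, f x ∈ L) : ∀ x ∈ A.reverse.map f, x ∈ L := by
  simp only [List.mem_map, List.mem_reverse, forall_exists_index, and_imp]
  rintro _ x hx rfl
  exact hf x (hA x hx)

lemma count_phi1_s5 {A : List ℕ} (hA : ∀ x ∈ A, x ∈ ({1, 2, 3, 4} : Finset ℕ)) :
    (phi1 A).count 1 = A.count 2 ∧ (phi1 A).count 2 = A.count 3 ∧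
      (phi1 A).count 3 = A.count 4 ∧ (phi1 A).count 4 = A.count 1 :=
  ⟨count_reverse_map_of_forall_iff hA (by decide), count_reverse_map_of_forall_iff hA (by decide),
    count_reverse_map_of_forall_iff hA (by decide), count_reverse_map_of_forall_iff hA (by decide)⟩

lemma count_phi2_s5 {A : List ℕ} (hA : ∀ x ∈ A, x ∈ ({1, 2, 3, 4} : Finset ℕ)) :
    (phi2 A).count 1 = A.count 4 ∧ (phi2 A).count 2 = A.count 1 ∧
      (phi2 A).count 3 = A.count 2 ∧ (phi2 A).count 4 = A.count 3 :=
  ⟨count_reverse_map_of_forall_iff hA (by decide), count_reverse_map_of_forall_iff hA (by decide),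
    count_reverse_map_of_forall_iff hA (by decide), count_reverse_map_of_forall_iff hA (by decide)⟩

lemma peano_succ_succ (n : ℕ) :
    peano (n + 2) = phi1 (peano (n + 1)) ++ [1] ++ peano (n + 1) ++ [2] ++ peano (n + 1)
      ++ [3] ++ phi2 (peano (n + 1)) := rfl

lemma mem_peano (n : ℕ) : ∀ x ∈ peano (n + 1), x ∈ ({1, 2, 3, 4} : Finset ℕ) := by
  induction n with
  | zero => decide
  | succ n ih =>
    have h1 := forall_mem_reverse_map ih (f := fun x => if x = 1 then 4 else x - 1) (by decide)
    have h2 := forall_mem_reverse_map ih (f := fun x => if x = 4 then 1 else x + 1) (by decide)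
    simp only [peano_succ_succ, List.mem_append, List.mem_singleton]
    rintro x ((((((hx | rfl) | hx) | rfl) | hx) | rfl) | hx)
    all_goals first | decide | exact h1 x hx | exact ih x hx | exact h2 x hx

-- Stated additively so that the induction never meets truncated subtraction.
lemma peano_count (n : ℕ) :
    (peano (n + 1)).count 1 = 4 ^ n ∧ (peano (n + 1)).count 2 + 1 = 4 ^ n + 2 ^ n ∧
      (peano (n + 1)).count 3 = 4 ^ n ∧ (peano (n + 1)).count 4 + 2 ^ n = 4 ^ n := by
  induction n with
  | zero => decide
  | succ n ih =>
    obtain ⟨p11, p12, p13, p14⟩ := count_phi1_s5 (mem_peano n)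
    obtain ⟨p21, p22, p23, p24⟩ := count_phi2_s5 (mem_peano n)
    obtain ⟨h1, h2, h3, h4⟩ := ih
    simp only [peano_succ_succ, List.count_append, List.count_singleton, Nat.reduceBEq,
      Bool.false_eq_true, reduceIte, p11, p12, p13, p14, p21, p22, p23, p24, pow_succ]
    omega

theorem peano_constCount (n : ℕ) (hn : 1 ≤ n) (ℓ : ℕ) (hℓ : 1 ≤ ℓ) :
    constCount (peano n) ℓ =
      Nat.choose (4 ^ (n - 1) - 2 ^ (n - 1)) ℓ + 2 * Nat.choose (4 ^ (n - 1)) ℓ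
        + Nat.choose (4 ^ (n - 1) + 2 ^ (n - 1) - 1) ℓ := by
  obtain ⟨m, rfl⟩ := Nat.exists_eq_add_of_le' hn
  obtain ⟨h1, h2, h3, h4⟩ := peano_count m
  rw [constCount_eq_sum_choose (mem_peano m) hℓ, Nat.add_sub_cancel, sum_insert (by decide),
    sum_insert (by decide), sum_insert (by decide), sum_singleton, h1, h3,
    show (peano (m + 1)).count 2 = 4 ^ m + 2 ^ m - 1 by omega,
    show (peano (m + 1)).count 4 = 4 ^ m - 2 ^ m by omega]
  ring
end

section
/- Let r(A) and d(A) denote the number of rises (indices i with a_i < a_{i+1}) and descents (indices i with a_i > a_{i+1}) of a word A over {1,2,3,4}. If A is a word beginning with 1 and ending with 3, then r(φ1(A)) = d(A) + 1 and d(φ1(A)) = r(A) - 1. -/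
-- auxiliary material

def wf (x : ℕ) : ℕ := if x = 1 then 4 else x - 1

def prs (w : List ℕ) : List (ℕ × ℕ) := w.zip w.tail

lemma prs_nil : prs [] = [] := rfl
lemma prs_single (a : ℕ) : prs [a] = [] := rfl
lemma prs_cons_cons (x y : ℕ) (s : List ℕ) : prs (x :: y :: s) = (x, y) :: prs (y :: s) := rfl

lemma prs_append_singleton (l : List ℕ) (a : ℕ) :
    prs (l ++ [a]) = prs l ++ ((l.getLast?).map (fun y => (y, a))).toList := by
  induction l with
  | nil => simp [prs]
  | cons x l ih =>
    cases l with
    | nil => simp [prs]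
    | cons y t =>
      simp only [List.cons_append] at *
      rw [prs_cons_cons, prs_cons_cons, ih, List.getLast?_cons_cons]
      simp

lemma prs_reverse (l : List ℕ) :
    prs l.reverse = ((prs l).reverse).map Prod.swap := by
  induction l with
  | nil => simp [prs]
  | cons x l ih =>
    cases l with
    | nil => simp [prs]
    | cons y t =>
      rw [List.reverse_cons, prs_append_singleton, ih, prs_cons_cons]
      simp

lemma prs_map (g : ℕ → ℕ) (l : List ℕ) :
    prs (l.map g) = (prs l).map (Prod.map g g) := by
  induction l with
  | nil => simp [prs]
  | cons x l ih =>
    cases l with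
    | nil => simp [prs]
    | cons y t =>
      have ih' : prs (g y :: List.map g t) = List.map (Prod.map g g) (prs (y :: t)) := by
        simpa using ih
      simp only [List.map_cons, prs_cons_cons, ih']
      rfl

lemma countP_add_eq {α : Type*} (q1 q2 q3 q4 : α → Bool) (l : List α)
    (h : ∀ x ∈ l, (if q1 x then 1 else 0) + (if q2 x then 1 else 0)
      = (if q3 x then 1 else 0) + (if q4 x then 1 else 0)) :
    l.countP q1 + l.countP q2 = l.countP q3 + l.countP q4 := by
  induction l with
  | nil => simp
  | cons a l ih =>
    have h1 := h a (by simp)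
    have h2 := ih (fun x hx => h x (by simp [hx]))
    simp only [List.countP_cons]
    omega

lemma mem_prs {A : List ℕ} (hA : ∀ x ∈ A, x = 1 ∨ x = 2 ∨ x = 3 ∨ x = 4) :
    ∀ p ∈ prs A, (p.1 = 1 ∨ p.1 = 2 ∨ p.1 = 3 ∨ p.1 = 4) ∧
      (p.2 = 1 ∨ p.2 = 2 ∨ p.2 = 3 ∨ p.2 = 4) := by
  intro p hp
  have h1 := List.of_mem_zip hp
  exact ⟨hA _ h1.1, hA _ (List.mem_of_mem_tail h1.2)⟩

lemma telescope (A : List ℕ) (hA : ∀ x ∈ A, x = 1 ∨ x = 2 ∨ x = 3 ∨ x = 4) :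
    (prs A).countP (fun p => decide (p.1 = 1 ∧ p.1 < p.2))
      + (if A.getLast? = some 1 then 1 else 0)
    = (prs A).countP (fun p => decide (p.2 = 1 ∧ p.2 < p.1))
      + (if A.head? = some 1 then 1 else 0) := by
  induction A with
  | nil => simp [prs]
  | cons a l ih =>
    cases l with
    | nil => simp [prs]
    | cons b t =>
      have ha := hA a (by simp)
      have hb := hA b (by simp)
      have ih' := ih (fun x hx => hA x (List.mem_cons_of_mem _ hx))
      rw [prs_cons_cons, List.countP_cons, List.countP_cons, List.getLast?_cons_cons]
      simp only [List.head?_cons, Option.some.injEq] at *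
      rcases ha with rfl | rfl | rfl | rfl <;> rcases hb with rfl | rfl | rfl | rfl <;>
        simp_all <;> omega

theorem phi1_rises_descents (A : List ℕ) (hA : ∀ x ∈ A, x = 1 ∨ x = 2 ∨ x = 3 ∨ x = 4)
    (h1 : A.head? = some 1) (h3 : A.getLast? = some 3) :
    rises (phi1 A) = descents A + 1 ∧ descents (phi1 A) = rises A - 1 := by
  -- express pairs of phi1 A
  have hphi : phi1 A = (A.map wf).reverse := by
    rw [phi1, List.map_reverse]; rfl
  have hprs : prs (phi1 A) = ((prs A).map (Prod.map wf wf)).reverse.map Prod.swap := by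
    rw [hphi, prs_reverse, prs_map]
  have hrphi : rises (phi1 A) = (prs A).countP (fun p => decide (wf p.2 < wf p.1)) := by
    rw [rises, ← List.countP_eq_length_filter]
    show (prs (phi1 A)).countP _ = _
    rw [hprs, List.countP_map, List.countP_reverse, List.countP_map]
    rfl
  have hdphi : descents (phi1 A) = (prs A).countP (fun p => decide (wf p.1 < wf p.2)) := by
    rw [descents, ← List.countP_eq_length_filter]
    show (prs (phi1 A)).countP _ = _
    rw [hprs, List.countP_map, List.countP_reverse, List.countP_map]
    rfl
  have hr : rises A = (prs A).countP (fun p => decide (p.1 < p.2)) := by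
    rw [rises, ← List.countP_eq_length_filter]; rfl
  have hd : descents A = (prs A).countP (fun p => decide (p.2 < p.1)) := by
    rw [descents, ← List.countP_eq_length_filter]; rfl
  have hmem := mem_prs hA
  have key1 : (prs A).countP (fun p => decide (wf p.2 < wf p.1))
      + (prs A).countP (fun p => decide (p.2 = 1 ∧ p.2 < p.1))
      = (prs A).countP (fun p => decide (p.2 < p.1))
      + (prs A).countP (fun p => decide (p.1 = 1 ∧ p.1 < p.2)) := by
    apply countP_add_eq
    intro p hp
    obtain ⟨hx, hy⟩ := hmem p hp
    obtain ⟨x, y⟩ := p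
    rcases hx with rfl | rfl | rfl | rfl <;> rcases hy with rfl | rfl | rfl | rfl <;> decide
  have key2 : (prs A).countP (fun p => decide (wf p.1 < wf p.2))
      + (prs A).countP (fun p => decide (p.1 = 1 ∧ p.1 < p.2))
      = (prs A).countP (fun p => decide (p.1 < p.2))
      + (prs A).countP (fun p => decide (p.2 = 1 ∧ p.2 < p.1)) := by
    apply countP_add_eq
    intro p hp
    obtain ⟨hx, hy⟩ := hmem p hp
    obtain ⟨x, y⟩ := p
    rcases hx with rfl | rfl | rfl | rfl <;> rcases hy with rfl | rfl | rfl | rfl <;> decide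
  have htel := telescope A hA
  rw [h1, h3] at htel
  have e1 : (if (some (3:ℕ) = some 1) then 1 else 0) = 0 := by norm_num
  have e2 : (if (some (1:ℕ) = some 1) then 1 else 0) = 1 := by norm_num
  rw [e1, e2] at htel
  rw [hrphi, hdphi, hr, hd]
  omega
end

section
/- Let r(B) and d(B) denote the number of rises and descents of a word B over {1,2,3,4}. If B is a word beginning with 2 and ending with 2 (with length at least 2), then r(φ2(B)) = d(B) and d(φ2(B)) = r(B). -/
theorem List.countP_add_countP_eq_of_forall {α : Type*} {p q r s : α → Bool} {l : List α}
    (h : ∀ a ∈ l, (p a).toNat + (q a).toNat = (r a).toNat + (s a).toNat) :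
    l.countP p + l.countP q = l.countP r + l.countP s := by
  induction l with
  | nil => rfl
  | cons a l ih =>
    have ha := h a List.mem_cons_self
    have hl := ih fun b hb => h b (List.mem_cons_of_mem a hb)
    simp only [List.countP_cons]
    revert ha
    cases p a <;> cases q a <;> cases r a <;> cases s a <;> simp <;> omega

theorem List.zip_tail_concat {α : Type*} (w : List α) (a : α) :
    (w ++ [a]).zip (w ++ [a]).tail = w.zip w.tail ++ (w.getLast?.map (·, a)).toList := by
  induction w with
  | nil => rfl
  | cons x w ih =>
    cases w with
    | nil => rfl
    | cons y w => simpa [List.zip_cons_cons, List.getLast?_cons_cons] using ih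

theorem List.zip_tail_reverse {α : Type*} (w : List α) :
    w.reverse.zip w.reverse.tail = ((w.zip w.tail).map Prod.swap).reverse := by
  induction w with
  | nil => rfl
  | cons a w ih =>
    cases w with
    | nil => rfl
    | cons b w =>
      rw [List.reverse_cons, List.zip_tail_concat, ih]
      simp [List.zip_cons_cons]

/-- Both sides count the letters of `w` satisfying `P`. -/
theorem List.countP_snd_zip_tail_add_head {α : Type*} (P : α → Bool) (w : List α) :
    (w.zip w.tail).countP (fun q => P q.2) + (w.head?.any P).toNat
      = (w.zip w.tail).countP (fun q => P q.1) + (w.getLast?.any P).toNat := by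
  induction w with
  | nil => rfl
  | cons a w ih =>
    cases w with
    | nil => simp
    | cons b w =>
      simp only [List.tail_cons, List.zip_cons_cons, List.countP_cons, List.head?_cons,
        List.getLast?_cons_cons, Option.any_some] at ih ⊢
      revert ih
      cases P a <;> cases P b <;> simp <;> omega

theorem rises_reverse_map (f : ℕ → ℕ) (w : List ℕ) :
    rises (w.reverse.map f) = (w.zip w.tail).countP (fun q => f q.2 < f q.1) := by
  rw [rises, ← List.countP_eq_length_filter, ← List.map_tail, List.zip_map, List.zip_tail_reverse,
    List.countP_map, List.countP_reverse, List.countP_map]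
  rfl

theorem descents_reverse_map (f : ℕ → ℕ) (w : List ℕ) :
    descents (w.reverse.map f) = (w.zip w.tail).countP (fun q => f q.1 < f q.2) := by
  rw [descents, ← List.countP_eq_length_filter, ← List.map_tail, List.zip_map,
    List.zip_tail_reverse, List.countP_map, List.countP_reverse, List.countP_map]
  rfl

theorem phi2_letter_lt_toNat_add {x y : ℕ} (hx : x ∈ Finset.Icc 1 4) (hy : y ∈ Finset.Icc 1 4) :
    (decide ((if y = 4 then 1 else y + 1) < (if x = 4 then 1 else x + 1))).toNat
        + (decide (x = 4)).toNat
      = (decide (y < x)).toNat + (decide (y = 4)).toNat := by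
  rw [Finset.mem_Icc] at hx hy
  simp only [Bool.toNat, cond_eq_ite]
  split_ifs <;> simp_all <;> omega

theorem phi2_rises_descents_two_general (B : List ℕ) (hB : ∀ x ∈ B, x = 1 ∨ x = 2 ∨ x = 3 ∨ x = 4)
    (h2 : B.head? = some 2) (h2' : B.getLast? = some 2) :
    rises (phi2 B) = descents B ∧ descents (phi2 B) = rises B := by
  have hfours := List.countP_snd_zip_tail_add_head (fun x => decide (x = 4)) B
  simp only [h2, h2', Option.any_some] at hfours
  have hletters : ∀ q ∈ B.zip B.tail, q.1 ∈ Finset.Icc 1 4 ∧ q.2 ∈ Finset.Icc 1 4 :=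
    fun q hq => by
      have := hB _ (List.of_mem_zip hq).1
      have := hB _ (List.tail_subset B (List.of_mem_zip hq).2)
      simp only [Finset.mem_Icc]
      omega
  have hrises := List.countP_add_countP_eq_of_forall fun q hq =>
    phi2_letter_lt_toNat_add (hletters q hq).1 (hletters q hq).2
  have hdescents := List.countP_add_countP_eq_of_forall fun q hq =>
    phi2_letter_lt_toNat_add (hletters q hq).2 (hletters q hq).1
  rw [phi2, rises_reverse_map, descents_reverse_map, rises, descents,
    ← List.countP_eq_length_filter, ← List.countP_eq_length_filter]
  constructor <;> omega

theorem phi2_rises_descents_two (B : List ℕ) (hB : ∀ x ∈ B, x = 1 ∨ x = 2 ∨ x = 3 ∨ x = 4)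
    (hlen : 2 ≤ B.length) (h2 : B.head? = some 2) (h2' : B.getLast? = some 2) :
    rises (phi2 B) = descents B ∧ descents (phi2 B) = rises B :=
  phi2_rises_descents_two_general B hB h2 h2'
end

section
/- Let r(A) and d(A) denote the number of rises and descents of a word A over {1,2,3,4}. If A begins with 1 and ends with 3, then r(φ2(A)) = d(A) and d(φ2(A)) = r(A). -/
/-!
Write `σ` for the letter map `phi2Letter` of φ2, so that the adjacent pair `(a, b)` of `A`
becomes the pair `(σ b, σ a)` of `φ2(A)`. On `{1, 2, 3, 4}` the map `σ` is increasing except that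
it sends `4` to the bottom, and for letters in this range
`[σ b < σ a] + [a = 4] = [b < a] + [b = 4]`.
Summed over the adjacent pairs of `A`, the correction terms count the letters `4` of `A` other
than the last one and other than the first one respectively; these agree because `A` neither
begins nor ends with `4`. Hence `r(φ2(A)) = d(A)`, and the same identity for the swapped pair
gives `d(φ2(A)) = r(A)`.
-/

namespace List

variable {α : Type*}

theorem zip_tail_eq_zip_dropLast_tail (l : List α) : l.zip l.tail = l.dropLast.zip l.tail := by
  rw [zip_eq_zip_take_min, dropLast_eq_take, length_tail, min_eq_right (Nat.sub_le _ _),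
    take_of_length_le (l := l.tail) (by simp)]

theorem zip_tail_reverse_s8 (l : List α) :
    l.reverse.zip l.reverse.tail = ((l.zip l.tail).map Prod.swap).reverse := by
  rw [zip_tail_eq_zip_dropLast_tail, dropLast_reverse, tail_reverse,
    zip_tail_eq_zip_dropLast_tail l, zip_swap, zip_eq_zipWith, zip_eq_zipWith,
    reverse_zipWith (by simp)]

theorem countP_dropLast_of_getLast? {p : α → Bool} {l : List α}
    (h : ∀ a ∈ l.getLast?, p a = false) : l.dropLast.countP p = l.countP p := by
  rcases eq_nil_or_concat l with rfl | ⟨L, b, rfl⟩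
  · rfl
  · simp_all [countP_append]

theorem countP_tail_of_head? {p : α → Bool} {l : List α}
    (h : ∀ a ∈ l.head?, p a = false) : l.tail.countP p = l.countP p := by
  cases l <;> simp_all

theorem countP_fst_zip_tail_eq_countP_snd {p : α → Bool} {l : List α}
    (hhead : ∀ a ∈ l.head?, p a = false) (hlast : ∀ a ∈ l.getLast?, p a = false) :
    (l.zip l.tail).countP (p ∘ Prod.fst) = (l.zip l.tail).countP (p ∘ Prod.snd) := by
  rw [← countP_map, ← countP_map, map_snd_zip (by simp), zip_tail_eq_zip_dropLast_tail,
    map_fst_zip (by simp), countP_dropLast_of_getLast? hlast, countP_tail_of_head? hhead]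

theorem countP_add_countP_eq_of_forall_s8 {p₁ p₂ q₁ q₂ : α → Bool} {l : List α}
    (h : ∀ x ∈ l, (p₁ x).toNat + (p₂ x).toNat = (q₁ x).toNat + (q₂ x).toNat) :
    l.countP p₁ + l.countP p₂ = l.countP q₁ + l.countP q₂ := by
  induction l with
  | nil => rfl
  | cons x l ih =>
    have hx := h x mem_cons_self
    have hl := ih fun y hy => h y (mem_cons_of_mem x hy)
    simp only [countP_cons]
    revert hx
    cases p₁ x <;> cases p₂ x <;> cases q₁ x <;> cases q₂ x <;> simp <;> omega

end List

def phi2Letter (x : ℕ) : ℕ := if x = 4 then 1 else x + 1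

theorem phi2_eq_map_phi2Letter (A : List ℕ) : phi2 A = A.reverse.map phi2Letter := rfl

theorem countP_zip_tail_phi2 (p : ℕ × ℕ → Bool) (A : List ℕ) :
    ((phi2 A).zip (phi2 A).tail).countP p
      = (A.zip A.tail).countP fun x => p (phi2Letter x.2, phi2Letter x.1) := by
  rw [phi2_eq_map_phi2Letter, ← List.map_tail, List.zip_map, List.zip_tail_reverse_s8,
    List.countP_map, List.countP_reverse, List.countP_map]
  rfl

theorem rises_eq_countP (w : List ℕ) : rises w = (w.zip w.tail).countP fun p => p.1 < p.2 :=
  (List.countP_eq_length_filter).symm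

theorem descents_eq_countP (w : List ℕ) : descents w = (w.zip w.tail).countP fun p => p.2 < p.1 :=
  (List.countP_eq_length_filter).symm

theorem toNat_decide_phi2Letter_lt_add {a b : ℕ} (ha : a = 1 ∨ a = 2 ∨ a = 3 ∨ a = 4)
    (hb : b = 1 ∨ b = 2 ∨ b = 3 ∨ b = 4) :
    (decide (phi2Letter b < phi2Letter a)).toNat + (decide (a = 4)).toNat
      = (decide (b < a)).toNat + (decide (b = 4)).toNat := by
  rcases ha with rfl | rfl | rfl | rfl <;> rcases hb with rfl | rfl | rfl | rfl <;> decide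

theorem phi2_rises_descents (A : List ℕ) (hA : ∀ x ∈ A, x = 1 ∨ x = 2 ∨ x = 3 ∨ x = 4)
    (h1 : A.head? = some 1) (h3 : A.getLast? = some 3) :
    rises (phi2 A) = descents A ∧ descents (phi2 A) = rises A := by
  have hpairs : ∀ x ∈ A.zip A.tail, (x.1 = 1 ∨ x.1 = 2 ∨ x.1 = 3 ∨ x.1 = 4)
      ∧ (x.2 = 1 ∨ x.2 = 2 ∨ x.2 = 3 ∨ x.2 = 4) := fun x hx =>
    ⟨hA _ (List.of_mem_zip hx).1, hA _ (List.mem_of_mem_tail (List.of_mem_zip hx).2)⟩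
  have hfours : (A.zip A.tail).countP (fun x => x.1 = 4)
      = (A.zip A.tail).countP (fun x => x.2 = 4) :=
    List.countP_fst_zip_tail_eq_countP_snd (p := fun a => a = 4)
      (by simp [h1]) (by simp [h3])
  have hrises := List.countP_add_countP_eq_of_forall_s8 fun x hx =>
    toNat_decide_phi2Letter_lt_add (hpairs x hx).1 (hpairs x hx).2
  have hdescents := List.countP_add_countP_eq_of_forall_s8 fun x hx =>
    toNat_decide_phi2Letter_lt_add (hpairs x hx).2 (hpairs x hx).1
  simp only [rises_eq_countP, descents_eq_countP, countP_zip_tail_phi2]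
  omega
end

section
/- Let r_n and d_n be the number of rises and descents of the Peano word X_n. For all k ≥ 0, r_{2k+2} = d_{2k+2} = (2/5)(16^{k+1} - 1), i.e. 5·r_{2k+2} = 5·d_{2k+2} = 2(16^{k+1} - 1). -/
def F (x : ℕ) : ℕ := if x = 1 then 4 else x - 1
def G (x : ℕ) : ℕ := if x = 4 then 1 else x + 1

def cnt (p : ℕ → ℕ → Bool) : List ℕ → ℕ
  | x :: y :: t => (if p x y then 1 else 0) + cnt p (y :: t)
  | _ => 0

lemma cnt_eq (p : ℕ → ℕ → Bool) (w : List ℕ) :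
    ((w.zip w.tail).filter (fun q => p q.1 q.2)).length = cnt p w := by
  induction w with
  | nil => rfl
  | cons x w ih =>
    cases w with
    | nil => rfl
    | cons y t =>
      simp only [List.tail_cons, List.zip_cons_cons, List.filter_cons] at *
      by_cases h : p x y <;> simp [h, cnt, ← ih] <;> omega

lemma cnt_cons (p : ℕ → ℕ → Bool) (x : ℕ) (w : List ℕ) :
    cnt p (x :: w) = cnt p w + (w.head?.elim 0 (fun y => if p x y then 1 else 0)) := by
  cases w <;> simp [cnt] <;> omega

lemma cnt_mid (p : ℕ → ℕ → Bool) (a b : List ℕ) (x : ℕ) :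
    cnt p (a ++ x :: b) = cnt p (a ++ [x]) + cnt p (x :: b) := by
  induction a with
  | nil => simp [cnt]
  | cons y a ih =>
    rw [List.cons_append, List.cons_append, cnt_cons, cnt_cons, ih]
    have : (a ++ x :: b).head? = (a ++ [x]).head? := by
      rw [List.head?_append, List.head?_append]; rfl
    rw [this]; omega

lemma cnt_snoc (p : ℕ → ℕ → Bool) (v : List ℕ) (x : ℕ) :
    cnt p (v ++ [x]) = cnt p v + (v.getLast?.elim 0 (fun y => if p y x then 1 else 0)) := by
  induction v with
  | nil => simp [cnt]
  | cons y v ih =>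
    rw [List.cons_append, cnt_cons, cnt_cons, ih]
    cases v with
    | nil => simp [cnt]
    | cons z v' => simp only [List.cons_append, List.head?_cons, List.getLast?_cons_cons]; omega

lemma cnt_reverse (p : ℕ → ℕ → Bool) (w : List ℕ) :
    cnt p w.reverse = cnt (fun x y => p y x) w := by
  induction w with
  | nil => rfl
  | cons x w ih =>
    rw [List.reverse_cons, cnt_snoc, ih, List.getLast?_reverse, cnt_cons]

lemma cnt_map (p : ℕ → ℕ → Bool) (h : ℕ → ℕ) (w : List ℕ) :
    cnt p (w.map h) = cnt (fun x y => p (h x) (h y)) w := by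
  induction w with
  | nil => rfl
  | cons x w ih =>
    rw [List.map_cons, cnt_cons, ih, cnt_cons, List.head?_map]
    cases w <;> rfl

lemma cnt_phi1 (p : ℕ → ℕ → Bool) (w : List ℕ) :
    cnt p (phi1 w) = cnt (fun x y => p (F y) (F x)) w := by
  show cnt p (w.reverse.map F) = _
  rw [cnt_map, cnt_reverse]

lemma cnt_phi2 (p : ℕ → ℕ → Bool) (w : List ℕ) :
    cnt p (phi2 w) = cnt (fun x y => p (G y) (G x)) w := by
  show cnt p (w.reverse.map G) = _
  rw [cnt_map, cnt_reverse]

lemma cnt_congr (p q : ℕ → ℕ → Bool) (w : List ℕ)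
    (H : ∀ x ∈ w, ∀ y ∈ w, p x y = q x y) : cnt p w = cnt q w := by
  induction w with
  | nil => rfl
  | cons x w ih =>
    cases w with
    | nil => rfl
    | cons y t =>
      have h1 := H x (by simp) y (by simp)
      simp only [cnt, h1]
      rw [ih (fun a ha b hb => H a (by simp [ha]) b (by simp [hb]))]

def pR : ℕ → ℕ → Bool := fun x y => x < y
def pD : ℕ → ℕ → Bool := fun x y => y < x
def pRf : ℕ → ℕ → Bool := fun x y => F x < F y
def pDf : ℕ → ℕ → Bool := fun x y => F y < F x
def pRg : ℕ → ℕ → Bool := fun x y => G x < G y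
def pDg : ℕ → ℕ → Bool := fun x y => G y < G x
def pR2 : ℕ → ℕ → Bool := fun x y => F (F x) < F (F y)
def pD2 : ℕ → ℕ → Bool := fun x y => F (F y) < F (F x)

def Alph (w : List ℕ) : Prop := ∀ x ∈ w, x = 1 ∨ x = 2 ∨ x = 3 ∨ x = 4

lemma cnt_phi1_congr (p q : ℕ → ℕ → Bool) (w : List ℕ) (ha : Alph w)
    (hpq : ∀ x y, (x = 1 ∨ x = 2 ∨ x = 3 ∨ x = 4) → (y = 1 ∨ y = 2 ∨ y = 3 ∨ y = 4) →
      p (F y) (F x) = q x y) : cnt p (phi1 w) = cnt q w := by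
  rw [cnt_phi1]; exact cnt_congr _ _ _ fun x hx y hy => hpq x y (ha x hx) (ha y hy)

lemma cnt_phi2_congr (p q : ℕ → ℕ → Bool) (w : List ℕ) (ha : Alph w)
    (hpq : ∀ x y, (x = 1 ∨ x = 2 ∨ x = 3 ∨ x = 4) → (y = 1 ∨ y = 2 ∨ y = 3 ∨ y = 4) →
      p (G y) (G x) = q x y) : cnt p (phi2 w) = cnt q w := by
  rw [cnt_phi2]; exact cnt_congr _ _ _ fun x hx y hy => hpq x y (ha x hx) (ha y hy)

-- exact transforms
lemma t1R (w : List ℕ) : cnt pR (phi1 w) = cnt pDf w := by rw [cnt_phi1]; rfl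
lemma t1D (w : List ℕ) : cnt pD (phi1 w) = cnt pRf w := by rw [cnt_phi1]; rfl
lemma t1Rf (w : List ℕ) : cnt pRf (phi1 w) = cnt pD2 w := by rw [cnt_phi1]; rfl
lemma t1Df (w : List ℕ) : cnt pDf (phi1 w) = cnt pR2 w := by rw [cnt_phi1]; rfl
lemma t2R (w : List ℕ) : cnt pR (phi2 w) = cnt pDg w := by rw [cnt_phi2]; rfl
lemma t2D (w : List ℕ) : cnt pD (phi2 w) = cnt pRg w := by rw [cnt_phi2]; rfl
-- alphabet-dependent transforms
lemma t1Rg (w : List ℕ) (ha : Alph w) : cnt pRg (phi1 w) = cnt pD w :=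
  cnt_phi1_congr _ _ _ ha (by rintro x y (rfl|rfl|rfl|rfl) (rfl|rfl|rfl|rfl) <;> rfl)
lemma t1Dg (w : List ℕ) (ha : Alph w) : cnt pDg (phi1 w) = cnt pR w :=
  cnt_phi1_congr _ _ _ ha (by rintro x y (rfl|rfl|rfl|rfl) (rfl|rfl|rfl|rfl) <;> rfl)
lemma t1R2 (w : List ℕ) (ha : Alph w) : cnt pR2 (phi1 w) = cnt pDg w :=
  cnt_phi1_congr _ _ _ ha (by rintro x y (rfl|rfl|rfl|rfl) (rfl|rfl|rfl|rfl) <;> rfl)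
lemma t1D2 (w : List ℕ) (ha : Alph w) : cnt pD2 (phi1 w) = cnt pRg w :=
  cnt_phi1_congr _ _ _ ha (by rintro x y (rfl|rfl|rfl|rfl) (rfl|rfl|rfl|rfl) <;> rfl)
lemma t2Rf (w : List ℕ) (ha : Alph w) : cnt pRf (phi2 w) = cnt pD w :=
  cnt_phi2_congr _ _ _ ha (by rintro x y (rfl|rfl|rfl|rfl) (rfl|rfl|rfl|rfl) <;> rfl)
lemma t2Df (w : List ℕ) (ha : Alph w) : cnt pDf (phi2 w) = cnt pR w :=
  cnt_phi2_congr _ _ _ ha (by rintro x y (rfl|rfl|rfl|rfl) (rfl|rfl|rfl|rfl) <;> rfl)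
lemma t2Rg (w : List ℕ) (ha : Alph w) : cnt pRg (phi2 w) = cnt pD2 w :=
  cnt_phi2_congr _ _ _ ha (by rintro x y (rfl|rfl|rfl|rfl) (rfl|rfl|rfl|rfl) <;> rfl)
lemma t2Dg (w : List ℕ) (ha : Alph w) : cnt pDg (phi2 w) = cnt pR2 w :=
  cnt_phi2_congr _ _ _ ha (by rintro x y (rfl|rfl|rfl|rfl) (rfl|rfl|rfl|rfl) <;> rfl)
lemma t2R2 (w : List ℕ) (ha : Alph w) : cnt pR2 (phi2 w) = cnt pDf w :=
  cnt_phi2_congr _ _ _ ha (by rintro x y (rfl|rfl|rfl|rfl) (rfl|rfl|rfl|rfl) <;> rfl)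
lemma t2D2 (w : List ℕ) (ha : Alph w) : cnt pD2 (phi2 w) = cnt pRf w :=
  cnt_phi2_congr _ _ _ ha (by rintro x y (rfl|rfl|rfl|rfl) (rfl|rfl|rfl|rfl) <;> rfl)

def stepw (w : List ℕ) : List ℕ := phi1 w ++ [1] ++ w ++ [2] ++ w ++ [3] ++ phi2 w

lemma head?_phi1 (w : List ℕ) : (phi1 w).head? = w.getLast?.map F := by
  show ((w.reverse.map _).head?) = _
  rw [List.head?_map, List.head?_reverse]; rfl

lemma getLast?_phi1 (w : List ℕ) : (phi1 w).getLast? = w.head?.map F := by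
  show ((w.reverse.map _).getLast?) = _
  rw [List.getLast?_map, List.getLast?_reverse]; rfl

lemma head?_phi2 (w : List ℕ) : (phi2 w).head? = w.getLast?.map G := by
  show ((w.reverse.map _).head?) = _
  rw [List.head?_map, List.head?_reverse]; rfl

lemma getLast?_phi2 (w : List ℕ) : (phi2 w).getLast? = w.head?.map G := by
  show ((w.reverse.map _).getLast?) = _
  rw [List.getLast?_map, List.getLast?_reverse]; rfl

lemma head?_stepw (w : List ℕ) (l : ℕ) (hl : w.getLast? = some l) :
    (stepw w).head? = some (F l) := by
  simp [stepw, List.head?_append, head?_phi1, hl]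

lemma getLast?_stepw (w : List ℕ) (h : ℕ) (hh : w.head? = some h) :
    (stepw w).getLast? = some (G h) := by
  rw [show stepw w = (phi1 w ++ [1] ++ w ++ [2] ++ w ++ [3]) ++ phi2 w from by
    simp [stepw]]
  rw [List.getLast?_append, getLast?_phi2, hh]; rfl

lemma alph_stepw (w : List ℕ) (ha : Alph w) : Alph (stepw w) := by
  intro x hx
  simp only [stepw, phi1, phi2, List.mem_append, List.mem_map, List.mem_reverse,
    List.mem_singleton] at hx
  rcases hx with ((((((⟨y, hy, rfl⟩ | rfl) | h) | rfl) | h) | rfl) | ⟨y, hy, rfl⟩)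
  · rcases ha y hy with rfl | rfl | rfl | rfl <;> simp
  · simp
  · exact ha x h
  · simp
  · exact ha x h
  · simp
  · rcases ha y hy with rfl | rfl | rfl | rfl <;> simp

lemma step_cnt (p : ℕ → ℕ → Bool) (w : List ℕ) (h l : ℕ)
    (hh : w.head? = some h) (hl : w.getLast? = some l) :
    cnt p (stepw w)
      = cnt p (phi1 w) + (cnt p w + cnt p w) + cnt p (phi2 w)
        + ((if p (F h) 1 then 1 else 0) + (if p 1 h then 1 else 0)
          + (if p l 2 then 1 else 0) + (if p 2 h then 1 else 0)
          + (if p l 3 then 1 else 0) + (if p 3 (G l) then 1 else 0)) := by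
  have hw : w ≠ [] := by rintro rfl; simp at hh
  have e1 : (phi1 w).getLast? = some (F h) := by rw [getLast?_phi1, hh]; rfl
  have e2 : (phi2 w).head? = some (G l) := by rw [head?_phi2, hl]; rfl
  have hA : (w ++ 2 :: (w ++ 3 :: phi2 w)).head? = some h := by
    rw [List.head?_append, hh]; rfl
  have hB : (w ++ 3 :: phi2 w).head? = some h := by
    rw [List.head?_append, hh]; rfl
  rw [show stepw w = phi1 w ++ 1 :: (w ++ 2 :: (w ++ 3 :: phi2 w)) by
    simp [stepw, List.append_assoc]]
  rw [cnt_mid, cnt_snoc, e1, cnt_cons, hA, cnt_mid, cnt_snoc, hl, cnt_cons, hB,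
    cnt_mid, cnt_snoc, hl, cnt_cons, e2]
  simp only [Option.elim_some]
  ring

def OddS (k : ℕ) (w : List ℕ) : Prop :=
  Alph w ∧ w.head? = some 1 ∧ w.getLast? = some 3 ∧
  5 * cnt pR w = 8 * 16 ^ k + 2 ∧ 5 * cnt pD w + 8 = 8 * 16 ^ k ∧
  5 * cnt pRf w + 3 = 8 * 16 ^ k ∧ 5 * cnt pDf w + 3 = 8 * 16 ^ k ∧
  5 * cnt pRg w = 8 * 16 ^ k + 2 ∧ 5 * cnt pDg w + 8 = 8 * 16 ^ k ∧
  5 * cnt pR2 w + 3 = 8 * 16 ^ k ∧ 5 * cnt pD2 w + 3 = 8 * 16 ^ k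

def EvenS (k : ℕ) (w : List ℕ) : Prop :=
  Alph w ∧ w.head? = some 2 ∧ w.getLast? = some 2 ∧
  5 * cnt pR w + 2 = 2 * 16 ^ (k + 1) ∧ 5 * cnt pD w + 2 = 2 * 16 ^ (k + 1) ∧
  5 * cnt pRf w + 2 = 2 * 16 ^ (k + 1) ∧ 5 * cnt pDf w + 2 = 2 * 16 ^ (k + 1) ∧
  5 * cnt pRg w + 2 = 2 * 16 ^ (k + 1) ∧ 5 * cnt pDg w + 2 = 2 * 16 ^ (k + 1) ∧
  5 * cnt pR2 w + 2 = 2 * 16 ^ (k + 1) ∧ 5 * cnt pD2 w + 2 = 2 * 16 ^ (k + 1)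

lemma odd_to_even (k : ℕ) (w : List ℕ) (H : OddS k w) : EvenS k (stepw w) := by
  obtain ⟨ha, hh, hl, e1, e2, e3, e4, e5, e6, e7, e8⟩ := H
  refine ⟨alph_stepw w ha, ?_, ?_, ?_, ?_, ?_, ?_, ?_, ?_, ?_, ?_⟩
  · rw [head?_stepw w 3 hl]; rfl
  · rw [getLast?_stepw w 1 hh]; rfl
  all_goals rw [step_cnt _ w 1 3 hh hl]
  · rw [t1R, t2R w, pow_succ]
    simp only [pR, F, G]; norm_num; omega
  · rw [t1D, t2D w, pow_succ]
    simp only [pD, F, G]; norm_num; omega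
  · rw [t1Rf, t2Rf w ha, pow_succ]
    simp only [pRf, F, G]; norm_num; omega
  · rw [t1Df, t2Df w ha, pow_succ]
    simp only [pDf, F, G]; norm_num; omega
  · rw [t1Rg w ha, t2Rg w ha, pow_succ]
    simp only [pRg, F, G]; norm_num; omega
  · rw [t1Dg w ha, t2Dg w ha, pow_succ]
    simp only [pDg, F, G]; norm_num; omega
  · rw [t1R2 w ha, t2R2 w ha, pow_succ]
    simp only [pR2, F, G]; norm_num; omega
  · rw [t1D2 w ha, t2D2 w ha, pow_succ]
    simp only [pD2, F, G]; norm_num; omega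

lemma even_to_odd (k : ℕ) (w : List ℕ) (H : EvenS k w) : OddS (k + 1) (stepw w) := by
  obtain ⟨ha, hh, hl, e1, e2, e3, e4, e5, e6, e7, e8⟩ := H
  refine ⟨alph_stepw w ha, ?_, ?_, ?_, ?_, ?_, ?_, ?_, ?_, ?_, ?_⟩
  · rw [head?_stepw w 2 hl]; rfl
  · rw [getLast?_stepw w 2 hh]; rfl
  all_goals rw [step_cnt _ w 2 2 hh hl]
  · rw [t1R, t2R w, pow_succ]
    simp only [pR, F, G]; norm_num; omega
  · rw [t1D, t2D w, pow_succ]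
    simp only [pD, F, G]; norm_num; omega
  · rw [t1Rf, t2Rf w ha, pow_succ]
    simp only [pRf, F, G]; norm_num; omega
  · rw [t1Df, t2Df w ha, pow_succ]
    simp only [pDf, F, G]; norm_num; omega
  · rw [t1Rg w ha, t2Rg w ha, pow_succ]
    simp only [pRg, F, G]; norm_num; omega
  · rw [t1Dg w ha, t2Dg w ha, pow_succ]
    simp only [pDg, F, G]; norm_num; omega
  · rw [t1R2 w ha, t2R2 w ha, pow_succ]
    simp only [pR2, F, G]; norm_num; omega
  · rw [t1D2 w ha, t2D2 w ha, pow_succ]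
    simp only [pD2, F, G]; norm_num; omega

lemma peano_step (n : ℕ) : peano (n + 2) = stepw (peano (n + 1)) := rfl

lemma odd_peano : ∀ k, OddS k (peano (2 * k + 1))
  | 0 => by
      constructor
      · intro x hx; simp [peano] at hx; omega
      refine ⟨rfl, rfl, ?_, ?_, ?_, ?_, ?_, ?_, ?_, ?_⟩ <;> decide
  | k + 1 => by
      have h1 := odd_to_even k _ (odd_peano k)
      have h2 := even_to_odd k _ h1
      have : 2 * (k + 1) + 1 = (2 * k + 1) + 2 := by ring
      rw [this, peano_step, show (2*k+1)+1 = (2*k)+2 from rfl, peano_step]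
      exact h2

lemma even_peano (k : ℕ) : EvenS k (peano (2 * k + 2)) := by
  have := odd_to_even k _ (odd_peano k)
  rwa [show 2 * k + 2 = (2 * k) + 2 from rfl, peano_step]

lemma rises_eq (w : List ℕ) : rises w = cnt pR w := cnt_eq pR w
lemma descents_eq (w : List ℕ) : descents w = cnt pD w := cnt_eq pD w

theorem peano_rises_descents_even (k : ℕ) :
    5 * rises (peano (2 * k + 2)) = 2 * (16 ^ (k + 1) - 1) ∧
      5 * descents (peano (2 * k + 2)) = 2 * (16 ^ (k + 1) - 1) := by
  obtain ⟨-, -, -, h1, h2, -⟩ := even_peano k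
  rw [rises_eq, descents_eq]
  have : 1 ≤ 16 ^ (k + 1) := Nat.one_le_pow _ _ (by norm_num)
  omega
end

section
/- For every even n, the number of rises of the Peano word X_n equals the number of descents of X_n. -/
/-!
Record, for every ordered pair of letters `a, b`, the number of factors `ab` minus the number of
factors `ba`; rises minus descents is this antisymmetric "flow" paired with `sign (b - a)`.
Since `φ1` and `φ2` reverse (negating the flow) and relabel the letters, the flow of
`φ1(Y) 1 Y 2 Y 3 φ2(Y)` depends only on the flow and the end letters of `Y`. So, flow and end
letters together, `X_{2m+1}` behaves like `123` and `X_{2m+2}` like the one-letter word `2`,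
whose flow vanishes.
-/

section AdjacentSum

variable {α β M : Type*} [AddCommMonoid M]

def adjacentSum (f : α → α → M) (w : List α) : M := (List.zipWith f w w.tail).sum

variable (f : α → α → M)

@[simp] lemma adjacentSum_singleton (a : α) : adjacentSum f [a] = 0 := rfl

@[simp] lemma adjacentSum_cons_cons (a b : α) (t : List α) :
    adjacentSum f (a :: b :: t) = f a b + adjacentSum f (b :: t) := rfl

lemma adjacentSum_append {u v : List α} {x y : α} (hu : u.getLast? = some x)
    (hv : v.head? = some y) :
    adjacentSum f (u ++ v) = adjacentSum f u + f x y + adjacentSum f v := by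
  induction u with
  | nil => simp at hu
  | cons a t ih =>
    cases t with
    | nil =>
      obtain rfl : a = x := by simpa using hu
      cases v with
      | nil => simp at hv
      | cons b v =>
        obtain rfl : b = y := by simpa using hv
        simp
    | cons b t =>
      rw [List.getLast?_cons_cons] at hu
      have := ih hu
      simp only [List.cons_append, adjacentSum_cons_cons] at this ⊢
      rw [this, add_assoc, add_assoc, add_assoc]

lemma adjacentSum_map (g : β → α) (w : List β) :
    adjacentSum f (w.map g) = adjacentSum (fun a b => f (g a) (g b)) w := by
  rw [adjacentSum, ← List.map_tail, List.zipWith_map, adjacentSum]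

lemma adjacentSum_reverse (w : List α) :
    adjacentSum f w.reverse = adjacentSum (fun a b => f b a) w := by
  induction w with
  | nil => rfl
  | cons a t ih =>
    cases t with
    | nil => rfl
    | cons b t =>
      rw [List.reverse_cons, adjacentSum_append f (x := b) (y := a) (by simp) rfl, ih]
      simp [add_comm]

end AdjacentSum

lemma rises_sub_descents_eq_adjacentSum_sign (w : List ℕ) :
    (rises w : ℤ) - descents w = adjacentSum (fun a b : ℕ => Int.sign ((b : ℤ) - a)) w := by
  rw [rises, descents, adjacentSum, ← List.map_uncurry_zip_eq_zipWith]
  induction w.zip w.tail with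
  | nil => rfl
  | cons p l ih =>
    obtain ⟨a, b⟩ := p
    rw [List.map_cons, List.sum_cons, ← ih, List.filter_cons, List.filter_cons]
    rcases lt_trichotomy a b with h | rfl | h
    · simp only [h, h.not_gt, decide_true, decide_false, Bool.false_eq_true, if_true, if_false,
        List.length_cons, Function.uncurry_apply_pair,
        Int.sign_eq_one_of_pos (by omega : (0 : ℤ) < b - a)]
      omega
    · simp
    · simp only [h, h.not_gt, decide_true, decide_false, Bool.false_eq_true, if_true, if_false,
        List.length_cons, Function.uncurry_apply_pair,
        Int.sign_eq_neg_one_of_neg (by omega : (b : ℤ) - a < 0)]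
      omega

def rotDown (x : ℕ) : ℕ := if x = 1 then 4 else x - 1

def rotUp (x : ℕ) : ℕ := if x = 4 then 1 else x + 1

lemma phi1_eq (A : List ℕ) : phi1 A = A.reverse.map rotDown := rfl

lemma phi2_eq (A : List ℕ) : phi2 A = A.reverse.map rotUp := rfl

def peanoStep (Y : List ℕ) : List ℕ := phi1 Y ++ [1] ++ Y ++ [2] ++ Y ++ [3] ++ phi2 Y

lemma peano_add_two (n : ℕ) : peano (n + 2) = peanoStep (peano (n + 1)) := rfl

lemma head?_peanoStep {Y : List ℕ} {l : ℕ} (hl : Y.getLast? = some l) :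
    (peanoStep Y).head? = some (rotDown l) := by
  simp [peanoStep, phi1_eq, hl]

lemma getLast?_peanoStep {Y : List ℕ} {h : ℕ} (hh : Y.head? = some h) :
    (peanoStep Y).getLast? = some (rotUp h) := by
  simp only [peanoStep, List.getLast?_append, phi2_eq, List.getLast?_map, List.getLast?_reverse, hh]
  rfl

lemma adjacentSum_peanoStep {M : Type*} [AddCommMonoid M] (f : ℕ → ℕ → M) {Y : List ℕ}
    {h l : ℕ} (hh : Y.head? = some h) (hl : Y.getLast? = some l) :
    adjacentSum f (peanoStep Y) =
      adjacentSum (fun a b => f (rotDown b) (rotDown a)) Y + f (rotDown h) 1 + f 1 h +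
        adjacentSum f Y + f l 2 + f 2 h + adjacentSum f Y + f l 3 + f 3 (rotUp l) +
        adjacentSum (fun a b => f (rotUp b) (rotUp a)) Y := by
  rw [peanoStep,
    adjacentSum_append f (x := 3) (y := rotUp l) List.getLast?_concat (by simp [phi2_eq, hl]),
    adjacentSum_append f (x := l) (y := 3) (by rw [List.getLast?_append, hl]; rfl) rfl,
    adjacentSum_append f (x := 2) (y := h) List.getLast?_concat hh,
    adjacentSum_append f (x := l) (y := 2) (by rw [List.getLast?_append, hl]; rfl) rfl,
    adjacentSum_append f (x := 1) (y := h) List.getLast?_concat hh,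
    adjacentSum_append f (x := rotDown h) (y := 1) (by simp [phi1_eq, hh]) rfl,
    phi1_eq, phi2_eq, adjacentSum_map, adjacentSum_map, adjacentSum_reverse, adjacentSum_reverse]
  simp only [adjacentSum_singleton, add_zero]

/-- Testing against all alternating weights `f` compares, for every pair of letters `a, b`, the
number of factors `ab` minus the number of factors `ba`. -/
def FlowEquiv (u v : List ℕ) : Prop :=
  u.head? = v.head? ∧ u.getLast? = v.getLast? ∧
    ∀ f : ℕ → ℕ → ℤ, (∀ a b, f b a = -f a b) → adjacentSum f u = adjacentSum f v

namespace FlowEquiv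

lemma refl (u : List ℕ) : FlowEquiv u u := ⟨rfl, rfl, fun _ _ => rfl⟩

lemma trans {u v w : List ℕ} (huv : FlowEquiv u v) (hvw : FlowEquiv v w) : FlowEquiv u w :=
  ⟨huv.1.trans hvw.1, huv.2.1.trans hvw.2.1, fun f hf => (huv.2.2 f hf).trans (hvw.2.2 f hf)⟩

lemma peanoStep {u v : List ℕ} (huv : FlowEquiv u v) :
    FlowEquiv (peanoStep u) (peanoStep v) := by
  obtain ⟨hhead, hlast, hsum⟩ := huv
  cases hu : u.head? with
  | none =>
    obtain rfl : u = [] := List.head?_eq_none_iff.mp hu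
    obtain rfl : v = [] := List.head?_eq_none_iff.mp (hhead ▸ hu)
    exact refl _
  | some h =>
    have hne : u ≠ [] := by rintro rfl; simp at hu
    obtain ⟨l, hl⟩ := Option.isSome_iff_exists.mp (List.getLast?_isSome.mpr hne)
    have hv : v.head? = some h := hhead ▸ hu
    have hvl : v.getLast? = some l := hlast ▸ hl
    refine ⟨by rw [head?_peanoStep hl, head?_peanoStep hvl],
      by rw [getLast?_peanoStep hu, getLast?_peanoStep hv], fun f hf => ?_⟩
    rw [adjacentSum_peanoStep f hu hl, adjacentSum_peanoStep f hv hvl, hsum f hf,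
      hsum _ fun a b => hf _ _, hsum _ fun a b => hf _ _]

end FlowEquiv

lemma flowEquiv_peanoStep_123 : FlowEquiv (peanoStep [1, 2, 3]) [2] := by
  refine ⟨rfl, rfl, fun f hf => ?_⟩
  rw [show peanoStep [1, 2, 3] = [2, 1, 4, 1, 1, 2, 3, 2, 1, 2, 3, 3, 4, 3, 2] from rfl]
  simp only [adjacentSum_cons_cons, adjacentSum_singleton]
  linarith [hf 1 1, hf 3 3, hf 1 2, hf 1 4, hf 2 3, hf 3 4]

lemma flowEquiv_peanoStep_2 : FlowEquiv (peanoStep [2]) [1, 2, 3] := by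
  refine ⟨rfl, rfl, fun f hf => ?_⟩
  rw [show peanoStep [2] = [1, 1, 2, 2, 2, 3, 3] from rfl]
  simp only [adjacentSum_cons_cons, adjacentSum_singleton]
  linarith [hf 1 1, hf 2 2, hf 3 3]

lemma flowEquiv_peano_odd (m : ℕ) : FlowEquiv (peano (2 * m + 1)) [1, 2, 3] := by
  induction m with
  | zero => exact .refl _
  | succ m ih =>
    rw [show 2 * (m + 1) + 1 = 2 * m + 1 + 1 + 1 by ring, peano_add_two, peano_add_two]
    exact ((ih.peanoStep.trans flowEquiv_peanoStep_123).peanoStep).trans flowEquiv_peanoStep_2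

lemma flowEquiv_peano_even (m : ℕ) : FlowEquiv (peano (2 * m + 2)) [2] :=
  (flowEquiv_peano_odd m).peanoStep.trans flowEquiv_peanoStep_123

theorem peano_rises_eq_descents_of_even (n : ℕ) (hn : Even n) :
    rises (peano n) = descents (peano n) := by
  obtain ⟨k, rfl⟩ := hn
  rcases k with _ | m
  · rfl
  · have hsign := (flowEquiv_peano_even m).2.2 (fun a b : ℕ => Int.sign ((b : ℤ) - a))
      fun a b => by rw [← Int.sign_neg, neg_sub]
    have hdiff := rises_sub_descents_eq_adjacentSum_sign (peano (2 * m + 2))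
    rw [hsign, adjacentSum_singleton] at hdiff
    rw [show m + 1 + (m + 1) = 2 * m + 2 by ring]
    omega
end

section
/- For every k ≥ 0 and ℓ ≥ 1, the number of occurrences of the pattern [1-1^ℓ-2] in the Peano word X_{2k+1} equals C(4^{2k}-1, ℓ), while the number of occurrences of this pattern in X_{2k+2} is 0. -/
/-- Number of occurrences of the pattern `[1-1^ℓ-2]`: sets of `ℓ` interior positions at
which the letters equal the first letter of `w`, the first letter being smaller than the
last letter. -/
def pat112Count (w : List ℕ) (ℓ : ℕ) : ℕ :=
  (Finset.univ.filter (fun s : Finset (Fin w.length) =>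
    s.card = ℓ ∧ (∀ i ∈ s, 0 < (i : ℕ) ∧ (i : ℕ) < w.length - 1) ∧
      (∀ i ∈ s, w.get i = w.headI) ∧ w.headI < w.getLastD 0)).card

/-!
The letter maps of `φ1` and `φ2` are the cyclic shifts `x ↦ x - 1` and `x ↦ x + 1` of
`{1, 2, 3, 4}`, so the letter counts of `Xₙ₊₁ = φ1(Xₙ) 1 Xₙ 2 Xₙ 3 φ2(Xₙ)` satisfy a
linear recursion, which keeps `#1 = #3 = 4ⁿ` in `Xₙ₊₁`. The first letter of `Xₙ₊₁` is
the shifted last letter of `Xₙ` and vice versa, so the endpoints alternate: `X₂ₖ₊₁` runs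
from `1` to `3` and `X₂ₖ₊₂` from `2` to `2`. Hence in `X₂ₖ₊₁` an occurrence is any
`ℓ`-subset of the `4^{2k} - 1` interior `1`s, while in `X₂ₖ₊₂` the condition `w₁ < wₘ`
fails.
-/

theorem List.count_map_of_forall_mem_iff {α β : Type*} [DecidableEq α] [DecidableEq β]
    {f : α → β} {l : List α} {a : α} {b : β} (h : ∀ x ∈ l, f x = b ↔ x = a) :
    (l.map f).count b = l.count a := by
  simp only [List.count, List.countP_map]
  exact List.countP_congr (by simpa using h)

theorem List.headI_eq_of_head?_eq_some {α : Type*} [Inhabited α] {l : List α} {a : α}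
    (h : l.head? = some a) : l.headI = a := by
  obtain ⟨t, rfl⟩ := List.head?_eq_some_iff.1 h
  rfl

lemma pat112Count_eq_zero {w : List ℕ} {a b : ℕ} (ha : w.head? = some a)
    (hb : w.getLast? = some b) (hba : b ≤ a) (ℓ : ℕ) : pat112Count w ℓ = 0 := by
  have hnlt : ¬ w.headI < w.getLastD 0 := by simp [List.headI_eq_of_head?_eq_some ha, hb, hba]
  rw [pat112Count, Finset.card_eq_zero, Finset.filter_eq_empty_iff]
  exact fun _ _ hs => hnlt hs.2.2.2

lemma pat112Count_eq_choose {w : List ℕ} {a b : ℕ} (ha : w.head? = some a)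
    (hb : w.getLast? = some b) (hab : a < b) (ℓ : ℕ) :
    pat112Count w ℓ = (w.count a - 1).choose ℓ := by
  obtain ⟨hpos, hfirst⟩ : ∃ h : 0 < w.length, w[0] = a := by
    simpa [List.head?_eq_getElem?, List.getElem?_eq_some_iff] using ha
  obtain ⟨_, hlast⟩ : ∃ h : w.length - 1 < w.length, w[w.length - 1] = b := by
    simpa [List.getLast?_eq_getElem?, List.getElem?_eq_some_iff] using hb
  let S : Finset (Fin w.length) :=
    {i | 0 < (i : ℕ) ∧ (i : ℕ) < w.length - 1 ∧ w.get i = a}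
  have hS : S = ({i | w.get i = a} : Finset (Fin w.length)).erase ⟨0, hpos⟩ := by
    ext ⟨i, hi⟩
    simp only [S, Finset.mem_filter, Finset.mem_univ, true_and, Finset.mem_erase, ne_eq,
      Fin.mk.injEq, List.get_eq_getElem]
    constructor
    · rintro ⟨hi0, -, hia⟩
      exact ⟨hi0.ne', hia⟩
    · rintro ⟨hi0, hia⟩
      refine ⟨Nat.pos_of_ne_zero hi0, lt_of_le_of_ne (by omega) fun hin => ?_, hia⟩
      subst hin
      exact hab.ne' (hlast.symm.trans hia)
  have hcard : S.card = w.count a - 1 := by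
    rw [hS, Finset.card_erase_of_mem (by simpa using hfirst)]
    congr 1
    exact Fin.card_filter_univ_eq_vector_get_eq_count a ⟨w, rfl⟩
  have hheadI : w.headI = a := List.headI_eq_of_head?_eq_some ha
  have hlastD : w.getLastD 0 = b := by simp [hb]
  rw [← hcard, ← Finset.card_powersetCard]
  unfold pat112Count
  congr 1
  ext s
  simp only [hheadI, hlastD, hab, and_true, Finset.mem_filter, Finset.mem_univ, true_and,
    Finset.mem_powersetCard, Finset.subset_iff, S]
  grind

section LetterMaps

variable {l : List ℕ}

lemma count_phi1_s17 (hl : ∀ x ∈ l, x ∈ Set.Icc 1 4) {a : ℕ} (ha : a ∈ Set.Icc 1 4) :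
    (phi1 l).count a = l.count (if a = 4 then 1 else a + 1) := by
  rw [phi1, List.count_map_of_forall_mem_iff, List.count_reverse]
  intro x hx
  have := hl x (List.mem_reverse.1 hx)
  simp only [Set.mem_Icc] at this ha
  split_ifs <;> omega

lemma count_phi2_s17 (hl : ∀ x ∈ l, x ∈ Set.Icc 1 4) {a : ℕ} (ha : a ∈ Set.Icc 1 4) :
    (phi2 l).count a = l.count (if a = 1 then 4 else a - 1) := by
  rw [phi2, List.count_map_of_forall_mem_iff, List.count_reverse]
  intro x hx
  have := hl x (List.mem_reverse.1 hx)
  simp only [Set.mem_Icc] at this ha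
  split_ifs <;> omega

lemma mem_Icc_of_mem_phi1 (hl : ∀ x ∈ l, x ∈ Set.Icc 1 4) :
    ∀ x ∈ phi1 l, x ∈ Set.Icc 1 4 := by
  simp only [phi1, List.mem_map, List.mem_reverse, forall_exists_index, and_imp,
    forall_apply_eq_imp_iff₂]
  intro x hx
  have := hl x hx
  simp only [Set.mem_Icc] at this ⊢
  split_ifs <;> omega

lemma mem_Icc_of_mem_phi2 (hl : ∀ x ∈ l, x ∈ Set.Icc 1 4) :
    ∀ x ∈ phi2 l, x ∈ Set.Icc 1 4 := by
  simp only [phi2, List.mem_map, List.mem_reverse, forall_exists_index, and_imp,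
    forall_apply_eq_imp_iff₂]
  intro x hx
  have := hl x hx
  simp only [Set.mem_Icc] at this ⊢
  split_ifs <;> omega

lemma head?_phi1_s17 : (phi1 l).head? = l.getLast?.map (fun x => if x = 1 then 4 else x - 1) := by
  rw [phi1, List.head?_map, List.head?_reverse]

lemma getLast?_phi2_s17 : (phi2 l).getLast? = l.head?.map (fun x => if x = 4 then 1 else x + 1) := by
  rw [phi2, List.getLast?_map, List.getLast?_reverse]

end LetterMaps

lemma mem_Icc_of_mem_peano (n : ℕ) : ∀ x ∈ peano n, x ∈ Set.Icc 1 4 := by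
  induction n using peano.induct with
  | case1 => simp [peano]
  | case2 => decide
  | case3 n ih =>
    have := mem_Icc_of_mem_phi1 ih
    have := mem_Icc_of_mem_phi2 ih
    simp only [peano, List.mem_append, List.mem_singleton]
    grind

lemma count_peano_add_two (n : ℕ) {a : ℕ} (ha : a ∈ Set.Icc 1 4) :
    (peano (n + 2)).count a = (peano (n + 1)).count (if a = 4 then 1 else a + 1)
      + 2 * (peano (n + 1)).count a + (peano (n + 1)).count (if a = 1 then 4 else a - 1)
      + if a ≤ 3 then 1 else 0 := by
  have hX := mem_Icc_of_mem_peano (n + 1)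
  rw [peano, List.count_append, List.count_append, List.count_append, List.count_append,
    List.count_append, List.count_append, count_phi1_s17 hX ha, count_phi2_s17 hX ha]
  simp only [Set.mem_Icc] at ha
  obtain ⟨h1, h4⟩ := ha
  interval_cases a <;> simp <;> ring

lemma count_peano (n : ℕ) :
    (peano (n + 1)).count 1 = 4 ^ n ∧ (peano (n + 1)).count 3 = 4 ^ n ∧
      (peano (n + 1)).count 2 + (peano (n + 1)).count 4 + 1 = 2 * 4 ^ n := by
  induction n with
  | zero => decide
  | succ n ih =>
    have h1 := count_peano_add_two n (a := 1) (by norm_num)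
    have h2 := count_peano_add_two n (a := 2) (by norm_num)
    have h3 := count_peano_add_two n (a := 3) (by norm_num)
    have h4 := count_peano_add_two n (a := 4) (by norm_num)
    norm_num at h1 h2 h3 h4
    rw [show n + 1 + 1 = n + 2 from rfl, pow_succ]
    omega

lemma head?_peano_add_two {n g : ℕ} (hg : (peano (n + 1)).getLast? = some g) :
    (peano (n + 2)).head? = some (if g = 1 then 4 else g - 1) := by
  simp [peano, List.head?_append, head?_phi1_s17, hg]

lemma getLast?_peano_add_two {n h : ℕ} (hh : (peano (n + 1)).head? = some h) :
    (peano (n + 2)).getLast? = some (if h = 4 then 1 else h + 1) := by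
  rw [peano, List.getLast?_append, getLast?_phi2_s17, hh]
  rfl

lemma peano_endpoints (k : ℕ) :
    (peano (2 * k + 1)).head? = some 1 ∧ (peano (2 * k + 1)).getLast? = some 3 ∧
      (peano (2 * k + 2)).head? = some 2 ∧ (peano (2 * k + 2)).getLast? = some 2 := by
  induction k with
  | zero => decide
  | succ k ih =>
    obtain ⟨-, -, hhead, hlast⟩ := ih
    have hhead' := head?_peano_add_two hlast
    have hlast' := getLast?_peano_add_two hhead
    exact ⟨hhead', hlast', head?_peano_add_two hlast', getLast?_peano_add_two hhead'⟩

theorem peano_pat112_general (k ℓ : ℕ) :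
    pat112Count (peano (2 * k + 1)) ℓ = Nat.choose (4 ^ (2 * k) - 1) ℓ ∧
      pat112Count (peano (2 * k + 2)) ℓ = 0 := by
  obtain ⟨hhead_odd, hlast_odd, hhead_even, hlast_even⟩ := peano_endpoints k
  refine ⟨?_, pat112Count_eq_zero hhead_even hlast_even le_rfl ℓ⟩
  rw [pat112Count_eq_choose hhead_odd hlast_odd (by norm_num), (count_peano (2 * k)).1]

theorem peano_pat112 (k ℓ : ℕ) (hℓ : 1 ≤ ℓ) :
    pat112Count (peano (2 * k + 1)) ℓ = Nat.choose (4 ^ (2 * k) - 1) ℓ ∧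
      pat112Count (peano (2 * k + 2)) ℓ = 0 :=
  peano_pat112_general k ℓ
end
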